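/- arXiv:0802.0165 — 3 statements merged into one kernel-verified Lean document; each statement's English description precedes it below -/
import Mathlib

section
/- Let E be an elliptic curve given by a Weierstrass equation Y²Z + a₁XYZ + a₃YZ² = X³ + a₂X²Z + a₄XZ² + a₆Z³ over a field K, and for distinct points A, B let u_{A,B} be the function with polar divisor -[A]-[B] defined as u_{A,B} = (y_A - y(A-B))/(x_A - x(A-B)), where x_A, y_A denote the coordinate functions composed with translation by -A. Then u_{B,A} = -u_{A,B} - a₁. -/
noncomputable section
namespace EllipticPeriods

variable {F : Type*} [Field F]

/-- x-coordinate of an affine point, with junk value 0 at the point at infinity. -/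
def xc {W : WeierstrassCurve.Affine F} : W.Point → F
  | .zero => 0
  | @WeierstrassCurve.Affine.Point.some _ _ _ x _ _ => x

/-- y-coordinate of an affine point, with junk value 0 at the point at infinity. -/
def yc {W : WeierstrassCurve.Affine F} : W.Point → F
  | .zero => 0
  | @WeierstrassCurve.Affine.Point.some _ _ _ _ y _ => y

open Classical in
/-- The function `u_{A,B} = (y_A - y(A-B))/(x_A - x(A-B))`, evaluated at `P`: this is the
slope of the line (secant, or tangent in the degenerate case) through the points
`P - A` and `A - B` of the curve. -/
def uf (W : WeierstrassCurve.Affine F) (A B P : W.Point) : F :=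
  W.slope (xc (P - A)) (xc (A - B)) (yc (P - A)) (yc (A - B))

/-- `Γ(A,B,C) = u_{A,B}(C)`. -/
def Gam (W : WeierstrassCurve.Affine F) (A B C : W.Point) : F := uf W A B C

/-! With `Q = P - A` and `R = A - B`, `u_{A,B}(P)` is the slope `λ` of the line through `Q` and `R`,
and `u_{B,A}(P)` that of the line through `Q + R` and `-R`. The first line meets `E` again in
`-(Q + R)`, so it is also the line through `-(Q + R)` and `R`; the negation
`(x, y) ↦ (x, -y - a₁x - a₃)` maps it to the line through `Q + R` and `-R` and turns `λ` into
`-λ - a₁`. When two of the points coincide the lines are tangents; the one computation that is not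
formal is that a secant meeting `E` again at one of its two points is the tangent there. -/

open WeierstrassCurve.Affine

section

variable {W : WeierstrassCurve.Affine F} [DecidableEq F]

lemma slope_negY_negY {x₁ x₂ y₁ y₂ : F} (h₁ : W.Equation x₁ y₁) (h₂ : W.Equation x₂ y₂)
    (hxy : ¬(x₁ = x₂ ∧ y₁ = W.negY x₂ y₂)) :
    W.slope x₁ x₂ (W.negY x₁ y₁) (W.negY x₂ y₂) = -W.slope x₁ x₂ y₁ y₂ - W.a₁ := by
  by_cases hx : x₁ = x₂
  · have hy : y₁ ≠ W.negY x₂ y₂ := fun hy => hxy ⟨hx, hy⟩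
    obtain rfl := hx
    obtain rfl := Y_eq_of_Y_ne h₁ h₂ rfl hy
    have hy' : W.negY x₁ y₁ ≠ W.negY x₁ (W.negY x₁ y₁) := fun h => hy (by rw [h, negY_negY])
    rw [slope_of_Y_ne rfl hy', slope_of_Y_ne rfl hy, negY_negY]
    have hd : y₁ - W.negY x₁ y₁ ≠ 0 := sub_ne_zero.mpr hy
    have hd' : W.negY x₁ y₁ - y₁ ≠ 0 := sub_ne_zero.mpr hy.symm
    field_simp
    simp only [negY]
    ring
  · rw [slope_of_X_ne hx, slope_of_X_ne hx]
    field_simp [sub_ne_zero.mpr hx]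
    simp only [negY]
    ring

lemma sub_eq_slope_mul_sub {x₁ x₂ y₁ y₂ : F} (h₁ : W.Equation x₁ y₁) (h₂ : W.Equation x₂ y₂)
    (hxy : ¬(x₁ = x₂ ∧ y₁ = W.negY x₂ y₂)) :
    y₁ - y₂ = W.slope x₁ x₂ y₁ y₂ * (x₁ - x₂) := by
  by_cases hx : x₁ = x₂
  · rw [Y_eq_of_Y_ne h₁ h₂ hx fun hy => hxy ⟨hx, hy⟩, hx, sub_self, sub_self, mul_zero]
  · rw [slope_of_X_ne hx, div_mul_cancel₀ _ (sub_ne_zero.mpr hx)]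

lemma slope_self_eq_slope_of_addX_eq {x₁ x₂ y₁ y₂ : F} (h₁ : W.Equation x₁ y₁)
    (h₂ : W.Equation x₂ y₂) (hx : x₁ ≠ x₂) (hy : y₂ ≠ W.negY x₂ y₂)
    (h : W.addX x₁ x₂ (W.slope x₁ x₂ y₁ y₂) = x₂) :
    W.slope x₂ x₂ y₂ y₂ = W.slope x₁ x₂ y₁ y₂ := by
  set L := W.slope x₁ x₂ y₁ y₂
  have hy₁ : y₁ = y₂ + L * (x₁ - x₂) := by
    linear_combination sub_eq_slope_mul_sub h₁ h₂ fun hxy => hx hxy.1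
  rw [equation_iff] at h₁ h₂
  rw [hy₁] at h₁
  rw [addX] at h
  rw [slope_of_Y_ne rfl hy, div_eq_iff (sub_ne_zero.mpr hy)]
  apply mul_right_cancel₀ (sub_ne_zero.mpr hx)
  simp only [negY]
  linear_combination h₂ - h₁ + (x₁ - x₂) ^ 2 * h

lemma slope_addX_negAddY {x₁ x₂ y₁ y₂ : F} (h₁ : W.Equation x₁ y₁) (h₂ : W.Equation x₂ y₂)
    (hxy : ¬(x₁ = x₂ ∧ y₁ = W.negY x₂ y₂))
    (h₃ : ¬(W.addX x₁ x₂ (W.slope x₁ x₂ y₁ y₂) = x₂ ∧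
      W.negAddY x₁ x₂ y₁ (W.slope x₁ x₂ y₁ y₂) = W.negY x₂ y₂)) :
    W.slope (W.addX x₁ x₂ (W.slope x₁ x₂ y₁ y₂)) x₂
      (W.negAddY x₁ x₂ y₁ (W.slope x₁ x₂ y₁ y₂)) y₂ = W.slope x₁ x₂ y₁ y₂ := by
  set L := W.slope x₁ x₂ y₁ y₂
  have hL := sub_eq_slope_mul_sub h₁ h₂ hxy
  by_cases hx₃ : W.addX x₁ x₂ L = x₂
  · have hy₃ : W.negAddY x₁ x₂ y₁ L = y₂ :=
      (Y_eq_of_X_eq (equation_negAdd h₁ h₂ hxy) h₂ hx₃).resolve_right fun hy => h₃ ⟨hx₃, hy⟩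
    have hy₂ : y₂ ≠ W.negY x₂ y₂ := fun hy => h₃ ⟨hx₃, hy₃.trans hy⟩
    rw [hx₃, hy₃]
    by_cases hx : x₁ = x₂
    · obtain rfl := hx
      obtain rfl := Y_eq_of_Y_ne h₁ h₂ rfl fun hy => hxy ⟨rfl, hy⟩
      rfl
    · exact slope_self_eq_slope_of_addX_eq h₁ h₂ hx hy₂ hx₃
  · rw [slope_of_X_ne hx₃, div_eq_iff (sub_ne_zero.mpr hx₃), negAddY]
    linear_combination hL

lemma slope_add_neg (Q R : W.Point) (hQ : Q ≠ 0) (hR : R ≠ 0) (hQR : Q + R ≠ 0) :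
    W.slope (xc (Q + R)) (xc (-R)) (yc (Q + R)) (yc (-R)) =
      -W.slope (xc Q) (xc R) (yc Q) (yc R) - W.a₁ := by
  obtain _ | @⟨x₁, y₁, h₁⟩ := Q
  · exact absurd rfl hQ
  obtain _ | @⟨x₂, y₂, h₂⟩ := R
  · exact absurd rfl hR
  have hxy : ¬(x₁ = x₂ ∧ y₁ = W.negY x₂ y₂) := fun h => hQR (Point.add_of_Y_eq h.1 h.2)
  have h₃ : ¬(W.addX x₁ x₂ (W.slope x₁ x₂ y₁ y₂) = x₂ ∧
      W.negAddY x₁ x₂ y₁ (W.slope x₁ x₂ y₁ y₂) = W.negY x₂ y₂) := by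
    rintro ⟨hx₃, hy₃⟩
    refine hQ (add_eq_right (b := Point.some _ _ h₂).mp ?_)
    rw [Point.add_some hxy]
    congr 1
    rw [addY, hx₃, hy₃, negY_negY]
  rw [Point.add_some hxy, Point.neg_some]
  simp only [xc, yc]
  rw [addY, slope_negY_negY (equation_negAdd h₁.1 h₂.1 hxy) h₂.1 h₃,
    slope_addX_negAddY h₁.1 h₂.1 hxy h₃]

end

/-- `u_{B,A} = -u_{A,B} - a₁`, as functions on `E` (i.e. at every point `P`
away from the poles `A`, `B`). -/
theorem u_swap {F : Type*} [Field F] (W : WeierstrassCurve.Affine F)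
    (A B : W.Point) (hAB : A ≠ B) (P : W.Point) (hPA : P ≠ A) (hPB : P ≠ B) :
    uf W B A P = -uf W A B P - W.a₁ := by
  classical
  have hPB' : P - B = (P - A) + (A - B) := (sub_add_sub_cancel P A B).symm
  have hBA : B - A = -(A - B) := (neg_sub A B).symm
  rw [uf, uf, hPB', hBA]
  exact slope_add_neg (P - A) (A - B) (sub_ne_zero.mpr hPA) (sub_ne_zero.mpr hAB)
    (hPB' ▸ sub_ne_zero.mpr hPB)

end EllipticPeriods
end
end

section
/- For pairwise distinct points A, B, C on an elliptic curve E, the following product formula holds as an identity of functions on E: u_{A,B}·u_{A,C} = x_A + Γ(A,B,C)·u_{A,C} + Γ(A,C,B)·u_{A,B} + a₂ + x_A(B) + x_A(C). -/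
/-!
With `Q = P - A`, `D = A - B` and `E = A - C`, the values `u_{A,B}(P)`, `u_{A,C}(P)`,
`Γ(A,B,C)` and `Γ(A,C,B)` are the slopes of the chords `QD`, `QE`, `(-E)D` and `(-D)E`,
and `x_A(B) = x(D)`, `x_A(C) = x(E)`. The formula thus becomes an identity between chord
slopes of three points `Q, D, E` of the cubic, which after clearing denominators is a linear
combination of the curve equations. Only the tangent cases need separate certificates:
`Q = D` (or symmetrically `Q = E`), and `E = -D`.
-/

noncomputable section
namespace EllipticPeriods

variable {F : Type*} [Field F]

section Coordinates

open WeierstrassCurve.Affine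

variable {W : WeierstrassCurve.Affine F} [DecidableEq F] {x₁ y₁ x₂ y₂ x₃ y₃ : F}

lemma slope_mul_slope_of_X_ne (h₁ : W.Equation x₁ y₁) (h₂ : W.Equation x₂ y₂)
    (h₃ : W.Equation x₃ y₃) (hx₁₂ : x₁ ≠ x₂) (hx₁₃ : x₁ ≠ x₃) (hx₂₃ : x₂ ≠ x₃) :
    W.slope x₁ x₂ y₁ y₂ * W.slope x₁ x₃ y₁ y₃ =
      x₁ + W.slope x₃ x₂ (W.negY x₃ y₃) y₂ * W.slope x₁ x₃ y₁ y₃ +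
        W.slope x₂ x₃ (W.negY x₂ y₂) y₃ * W.slope x₁ x₂ y₁ y₂ + W.a₂ + x₂ + x₃ := by
  rw [equation_iff] at h₁ h₂ h₃
  rw [slope_of_X_ne hx₁₂, slope_of_X_ne hx₁₃, slope_of_X_ne hx₂₃.symm, slope_of_X_ne hx₂₃]
  field_simp
  simp only [negY]
  linear_combination (-(x₃ - x₂) ^ 2) * h₁ + (x₁ - x₃) * (x₂ - x₃) * h₂ + (x₁ - x₂) * (x₃ - x₂) * h₃

lemma slope_self_mul_slope (h₁ : W.Equation x₁ y₁) (h₃ : W.Equation x₃ y₃)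
    (hy₁ : y₁ ≠ W.negY x₁ y₁) (hx₁₃ : x₁ ≠ x₃) :
    W.slope x₁ x₁ y₁ y₁ * W.slope x₁ x₃ y₁ y₃ =
      x₁ + W.slope x₃ x₁ (W.negY x₃ y₃) y₁ * W.slope x₁ x₃ y₁ y₃ +
        W.slope x₁ x₃ (W.negY x₁ y₁) y₃ * W.slope x₁ x₁ y₁ y₁ + W.a₂ + x₁ + x₃ := by
  rw [equation_iff] at h₁ h₃
  rw [slope_of_Y_ne rfl hy₁, slope_of_X_ne hx₁₃, slope_of_X_ne hx₁₃.symm, slope_of_X_ne hx₁₃]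
  field_simp
  simp only [negY]
  linear_combination (W.a₃ + 2 * y₁ + x₁ * W.a₁) * (h₁ - h₃)

lemma slope_mul_slope_negY (h₁ : W.Equation x₁ y₁) (h₂ : W.Equation x₂ y₂)
    (hy₂ : y₂ ≠ W.negY x₂ y₂) (hx₁₂ : x₁ ≠ x₂) :
    W.slope x₁ x₂ y₁ y₂ * W.slope x₁ x₂ y₁ (W.negY x₂ y₂) =
      x₁ + W.slope x₂ x₂ y₂ y₂ * W.slope x₁ x₂ y₁ (W.negY x₂ y₂) +
        W.slope x₂ x₂ (W.negY x₂ y₂) (W.negY x₂ y₂) * W.slope x₁ x₂ y₁ y₂ + W.a₂ + x₂ + x₂ := by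
  rw [equation_iff] at h₁ h₂
  rw [slope_of_X_ne hx₁₂, slope_of_X_ne hx₁₂, slope_of_Y_ne rfl hy₂,
    slope_of_Y_ne rfl (by rwa [negY_negY, ne_comm]), negY_negY]
  field_simp
  simp only [negY]
  linear_combination (-(W.a₃ + 2 * y₂ + x₂ * W.a₁) ^ 2) * (h₁ - h₂)

lemma slope_mul_slope (h₁ : W.Equation x₁ y₁) (h₂ : W.Equation x₂ y₂) (h₃ : W.Equation x₃ y₃)
    (h₁₂ : ¬(x₁ = x₂ ∧ y₁ = W.negY x₂ y₂)) (h₁₃ : ¬(x₁ = x₃ ∧ y₁ = W.negY x₃ y₃))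
    (h₂₃ : ¬(x₂ = x₃ ∧ y₂ = y₃)) :
    W.slope x₁ x₂ y₁ y₂ * W.slope x₁ x₃ y₁ y₃ =
      x₁ + W.slope x₃ x₂ (W.negY x₃ y₃) y₂ * W.slope x₁ x₃ y₁ y₃ +
        W.slope x₂ x₃ (W.negY x₂ y₂) y₃ * W.slope x₁ x₂ y₁ y₂ + W.a₂ + x₂ + x₃ := by
  by_cases hx₂₃ : x₂ = x₃
  · subst hx₂₃
    obtain rfl : y₃ = W.negY x₂ y₂ :=
      (Y_eq_of_X_eq h₃ h₂ rfl).resolve_left fun h => h₂₃ ⟨rfl, h.symm⟩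
    have hx₁₂ : x₁ ≠ x₂ := fun hx => (Y_eq_of_X_eq h₁ h₂ hx).elim
      (fun hy => h₁₃ ⟨hx, by rw [negY_negY, hy]⟩) fun hy => h₁₂ ⟨hx, hy⟩
    rw [negY_negY]
    exact slope_mul_slope_negY h₁ h₂ (fun hy => h₂₃ ⟨rfl, hy⟩) hx₁₂
  wlog hx₁₃ : x₁ ≠ x₃ generalizing x₂ y₂ x₃ y₃
  · rw [not_not] at hx₁₃
    subst hx₁₃
    linear_combination this h₃ h₂ h₁₃ h₁₂ (fun h => h₂₃ ⟨h.1.symm, h.2.symm⟩) (Ne.symm hx₂₃)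
      (Ne.symm hx₂₃)
  by_cases hx₁₂ : x₁ = x₂
  · subst hx₁₂
    obtain rfl := Y_eq_of_Y_ne h₁ h₂ rfl fun hy => h₁₂ ⟨rfl, hy⟩
    exact slope_self_mul_slope h₁ h₃ (fun hy => h₁₂ ⟨rfl, hy⟩) hx₁₃
  · exact slope_mul_slope_of_X_ne h₁ h₂ h₃ hx₁₂ hx₁₃ hx₂₃

end Coordinates

section Points

variable {W : WeierstrassCurve.Affine F}

lemma xc_neg (P : W.Point) : xc (-P) = xc P := by
  cases P <;> rfl

variable [DecidableEq F]

lemma xc_sub_comm (P Q : W.Point) : xc (P - Q) = xc (Q - P) := by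
  rw [← neg_sub, xc_neg]

def pointSlope (P Q : W.Point) : F := W.slope (xc P) (xc Q) (yc P) (yc Q)

lemma pointSlope_mul_pointSlope {Q D E : W.Point} (hQ : Q ≠ 0) (hD : D ≠ 0)
    (hE : E ≠ 0) (hQD : Q ≠ -D) (hQE : Q ≠ -E) (hDE : D ≠ E) :
    pointSlope Q D * pointSlope Q E =
      xc Q + pointSlope (-E) D * pointSlope Q E + pointSlope (-D) E * pointSlope Q D +
        W.a₂ + xc D + xc E := by
  rcases Q with _ | @⟨x₁, y₁, h₁⟩
  · exact absurd rfl hQ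
  rcases D with _ | @⟨x₂, y₂, h₂⟩
  · exact absurd rfl hD
  rcases E with _ | @⟨x₃, y₃, h₃⟩
  · exact absurd rfl hE
  have h₁₂ : ¬(x₁ = x₂ ∧ y₁ = W.negY x₂ y₂) := by
    rintro ⟨rfl, rfl⟩
    exact hQD rfl
  have h₁₃ : ¬(x₁ = x₃ ∧ y₁ = W.negY x₃ y₃) := by
    rintro ⟨rfl, rfl⟩
    exact hQE rfl
  have h₂₃ : ¬(x₂ = x₃ ∧ y₂ = y₃) := by
    rintro ⟨rfl, rfl⟩
    exact hDE rfl
  exact slope_mul_slope h₁.1 h₂.1 h₃.1 h₁₂ h₁₃ h₂₃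

end Points

open Classical in
/-- the product formula
`u_{A,B}·u_{A,C} = x_A + Γ(A,B,C)·u_{A,C} + Γ(A,C,B)·u_{A,B} + a₂ + x_A(B) + x_A(C)`
as an identity of functions on `E` (pointwise away from the poles `A, B, C`). -/
theorem u_product {F : Type*} [Field F] (W : WeierstrassCurve.Affine F)
    (A B C : W.Point) (hAB : A ≠ B) (hBC : B ≠ C) (hAC : A ≠ C)
    (P : W.Point) (hPA : P ≠ A) (hPB : P ≠ B) (hPC : P ≠ C) :
    uf W A B P * uf W A C P =
      xc (P - A) + Gam W A B C * uf W A C P + Gam W A C B * uf W A B P +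
        W.a₂ + xc (B - A) + xc (C - A) := by
  have hQD : P - A ≠ -(A - B) := by rwa [neg_sub, Ne, sub_left_inj]
  have hQE : P - A ≠ -(A - C) := by rwa [neg_sub, Ne, sub_left_inj]
  have hDE : A - B ≠ A - C := by rwa [Ne, sub_right_inj]
  have key := pointSlope_mul_pointSlope (sub_ne_zero.mpr hPA) (sub_ne_zero.mpr hAB)
    (sub_ne_zero.mpr hAC) hQD hQE hDE
  rw [neg_sub, neg_sub] at key
  rwa [xc_sub_comm B, xc_sub_comm C]

end EllipticPeriods
end
end

section
/- Let E be an elliptic curve over K = 𝔽_q, t ∈ E(𝔽_q) a point of order d ≥ 2 generating T, φ the q-power Frobenius endomorphism, and b ∈ E(K̄) a point with φ(b) = b + t and d·b ≠ O. Then the system Ω = (ω₀, ω₁, ..., ω_{d-1}), where ω₀ = 1 and ω_k = u_{O,kt}(b) for k ≢ 0 mod d, is a K-basis of the degree-d extension L = 𝔽_{q^d} of K. -/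
/-!
Suppose `∑ gₖ ωₖ = 0` with `gₖ ∈ 𝔽_q` and put `f = g₀ + ∑_{k ≠ 0} gₖ u_{O,kt}`, a combination of
slopes of lines through `-kt`. Since `φ` fixes the coefficients and the points `-kt` and moves
`b + jt` to `b + (j+1)t`, `f` vanishes at the `d` points `b + jt`. Clearing denominators by
`D = ∏_{k ≠ 0} (x - x(-kt))` turns `D f` into a polynomial function `A(x) + B(x) y` which also
vanishes at the `d - 1` points `-kt`, while its norm down to `L[x]` has degree at most `2d - 1`.
If `A + B y ≠ 0`, these `2d - 1` points are then exactly its affine zeros, so their sum `d • b`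
is `O` (the divisor is principal). Hence `A = B = 0`, and reading off the partial fractions of
`B / D` and `A / D` over each fibre `{kt, -kt}` of `x` gives `gₖ = 0`. As `d = [L : K]`,
`Ω` is a basis.
-/

noncomputable section
open Polynomial Finset WeierstrassCurve WeierstrassCurve.Affine
open scoped Polynomial.Bivariate nonZeroDivisors

/-- The `q` roots of `X ^ q - X` in `K` already exhaust its roots in `L`. -/
theorem FiniteField.mem_range_algebraMap_of_pow_card_eq {K L : Type*} [Field K] [Fintype K]
    [Field L] [Algebra K L] {a : L} (ha : a ^ Fintype.card K = a) :
    a ∈ Set.range (algebraMap K L) := by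
  have hX : (X ^ Fintype.card K - X : K[X]) ≠ 0 :=
    FiniteField.X_pow_card_sub_X_ne_zero K Fintype.one_lt_card
  have hroots := roots_map_of_injective_of_card_eq_natDegree (algebraMap K L).injective
    (p := X ^ Fintype.card K - X) <| by
      rw [FiniteField.roots_X_pow_card_sub_X,
        FiniteField.X_pow_card_sub_X_natDegree_eq K Fintype.one_lt_card]
      simp
  have hmem : a ∈ ((X ^ Fintype.card K - X : K[X]).map (algebraMap K L)).roots := by
    rw [mem_roots (Polynomial.map_ne_zero hX)]
    simp [ha]
  rw [← hroots, FiniteField.roots_X_pow_card_sub_X] at hmem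
  obtain ⟨k, -, rfl⟩ := Multiset.mem_map.mp hmem
  exact ⟨k, rfl⟩

theorem addOrderOf_nsmul_add_nsmul {G : Type*} [AddCommMonoid G] (b t : G) (j : ℕ) :
    addOrderOf t • (b + j • t) = addOrderOf t • b := by
  rw [smul_add, smul_comm, addOrderOf_nsmul_eq_zero, smul_zero, add_zero]

namespace Ideal

variable {K R : Type*} [Field K] [CommRing R] [Algebra K R]

theorem eq_of_le_of_finrank_quotient_le {I J : Ideal R} (hJI : J ≤ I)
    [FiniteDimensional K (R ⧸ J)] (h : Module.finrank K (R ⧸ J) ≤ Module.finrank K (R ⧸ I)) :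
    J = I := by
  let f := (Quotient.factorₐ K hJI).toLinearMap
  have hf : Function.Surjective f := Quotient.factor_surjective hJI
  have : FiniteDimensional K (R ⧸ I) := Module.Finite.of_surjective f hf
  have hf' : Function.Injective f := (LinearMap.injective_iff_surjective_of_finrank_eq_finrank
    (h.antisymm (LinearMap.finrank_le_finrank_of_surjective hf))).mpr hf
  refine hJI.antisymm fun r hr => ?_
  rw [← Quotient.eq_zero_iff_mem] at hr ⊢
  exact hf' (hr.trans (map_zero f).symm)

theorem finrank_quotient_iInf {ι : Type*} [Fintype ι] {I : ι → Ideal R}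
    (hI : Pairwise (Function.onFun IsCoprime I)) [∀ i, FiniteDimensional K (R ⧸ I i)] :
    Module.finrank K (R ⧸ ⨅ i, I i) = ∑ i, Module.finrank K (R ⧸ I i) := by
  rw [(AlgEquiv.ofRingEquiv (f := quotientInfRingEquivPiQuotient I hI)
    fun _ => rfl).toLinearEquiv.finrank_eq, Module.finrank_pi_fintype]

end Ideal

namespace Lagrange

variable {R ι : Type*} [Field R] {s : Finset ι} {v : ι → R}

theorem nodal_eq_pow_of_forall_eq {z : R} (h : ∀ i ∈ s, v i = z) :
    nodal s v = (X - C z) ^ #s := by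
  rw [nodal, prod_congr rfl fun i hi => by rw [h i hi], prod_const]

variable [DecidableEq ι]

theorem natDegree_sum_C_mul_nodal_erase_le (a : ι → R) :
    (∑ i ∈ s, C (a i) * nodal (s.erase i) v).natDegree ≤ #s - 1 :=
  natDegree_sum_le_of_forall_le _ _ fun i hi =>
    (natDegree_C_mul_le _ _).trans (by rw [natDegree_nodal, card_erase_of_mem hi])

theorem eval_sum_C_mul_nodal_erase_at_node (a : ι → R) {j : ι} (hj : j ∈ s) :
    (∑ i ∈ s, C (a i) * nodal (s.erase i) v).eval (v j) =
      a j * (nodal (s.erase j) v).eval (v j) := by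
  rw [eval_finsetSum, sum_eq_single_of_mem j hj fun i _ hij => by
    rw [eval_mul, eval_nodal_at_node (mem_erase.mpr ⟨hij.symm, hj⟩), mul_zero], eval_mul, eval_C]

theorem eval_sum_C_mul_nodal_erase (a : ι → R) {x : R} (hx : ∀ i ∈ s, x ≠ v i) :
    (∑ i ∈ s, C (a i) * nodal (s.erase i) v).eval x =
      (nodal s v).eval x * ∑ i ∈ s, a i / (x - v i) := by
  rw [eval_finsetSum, mul_sum]
  refine sum_congr rfl fun i hi => ?_
  have : x - v i ≠ 0 := sub_ne_zero.mpr (hx i hi)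
  rw [nodal_eq_mul_nodal_erase hi, eval_mul, eval_mul, eval_C, eval_sub, eval_X, eval_C]
  field_simp

theorem eq_zero_of_C_mul_nodal_eq_sum {c : R} {a : ι → R}
    (h : C c * nodal s v = ∑ i ∈ s, C (a i) * nodal (s.erase i) v) : c = 0 := by
  by_contra hc
  have hdeg := natDegree_sum_C_mul_nodal_erase_le (s := s) (v := v) a
  rw [← h, natDegree_C_mul hc, natDegree_nodal] at hdeg
  obtain rfl : s = ∅ := card_eq_zero.mp (by omega)
  exact hc (by simpa [nodal_empty] using h)

/-- The hypothesis says `∑ a i / (X - v i) = 0`; the conclusion, that its residue at `z`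
vanishes, also holds when nodes repeat. -/
theorem sum_filter_eq_zero_of_sum_C_mul_nodal_erase_eq_zero [DecidableEq R] {a : ι → R}
    (h : ∑ i ∈ s, C (a i) * nodal (s.erase i) v = 0) (z : R) :
    ∑ i ∈ s with v i = z, a i = 0 := by
  set t := s.filter (v · = z)
  set u := s.filter (¬ v · = z)
  obtain ht | ⟨i₀, hi₀⟩ := t.eq_empty_or_nonempty
  · rw [ht, sum_empty]
  obtain ⟨m, hm⟩ : ∃ m, #t = m + 1 := ⟨#t - 1, by have := card_pos.mpr ⟨i₀, hi₀⟩; omega⟩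
  have hsplit (i : ι) : nodal (s.erase i) v =
      nodal ((s.erase i).filter (v · = z)) v * nodal ((s.erase i).filter (¬ v · = z)) v :=
    (prod_filter_mul_prod_filter_not _ _ _).symm
  have hsum_t : ∑ i ∈ t, C (a i) * nodal (s.erase i) v =
      (X - C z) ^ m * (C (∑ i ∈ t, a i) * nodal u v) := by
    rw [map_sum, sum_mul, mul_sum]
    refine sum_congr rfl fun i hi => ?_
    have hiu : i ∉ u := fun hiu => (mem_filter.mp hiu).2 (mem_filter.mp hi).2
    rw [hsplit, filter_erase, filter_erase, erase_eq_of_notMem hiu,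
      nodal_eq_pow_of_forall_eq fun j hj => (mem_filter.mp (mem_of_mem_erase hj)).2,
      card_erase_of_mem hi, hm, Nat.add_sub_cancel]
    ring
  have hsum_u : ∑ i ∈ u, C (a i) * nodal (s.erase i) v =
      (X - C z) ^ m * ((X - C z) * ∑ i ∈ u, C (a i) * nodal (u.erase i) v) := by
    rw [mul_sum, mul_sum]
    refine sum_congr rfl fun i hi => ?_
    have hit : i ∉ t := fun hit => (mem_filter.mp hi).2 (mem_filter.mp hit).2
    rw [hsplit, filter_erase, filter_erase, erase_eq_of_notMem hit,
      nodal_eq_pow_of_forall_eq fun j hj => (mem_filter.mp hj).2, hm]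
    ring
  have hfactor : (X - C z) ^ m * (C (∑ i ∈ t, a i) * nodal u v +
      (X - C z) * ∑ i ∈ u, C (a i) * nodal (u.erase i) v) = 0 := by
    rw [mul_add, ← hsum_t, ← hsum_u, sum_filter_add_sum_filter_not, h]
  have hval := congrArg (eval z) ((mul_eq_zero.mp hfactor).resolve_left
    (pow_ne_zero _ (X_sub_C_ne_zero z)))
  rw [eval_add, eval_mul, eval_mul, eval_C, eval_sub, eval_X, eval_C, sub_self, zero_mul,
    add_zero, eval_zero] at hval
  exact (mul_eq_zero.mp hval).resolve_right
    (eval_nodal_not_at_node fun j hj => Ne.symm (mem_filter.mp hj).2)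

end Lagrange

namespace WeierstrassCurve.Affine.CoordinateRing

variable {F : Type*} [Field F] {W : Affine F}

lemma isMaximal_XYIdeal {x y : F} (h : W.Equation x y) : (XYIdeal W x (C y)).IsMaximal :=
  Ideal.Quotient.maximal_of_isField _ <|
    MulEquiv.isField (Field.toIsField F) (quotientXYIdealEquiv (W' := W) h).toMulEquiv

lemma finrank_quotient_XYIdeal {x y : F} (h : W.Equation x y) :
    Module.finrank F (W.CoordinateRing ⧸ XYIdeal W x (C y)) = 1 :=
  (quotientXYIdealEquiv (W' := W) h).toLinearEquiv.finrank_eq.trans (Module.finrank_self F)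

lemma XYIdeal_eq_ker_evalEval {x y : F} (h : W.Equation x y) :
    XYIdeal W x (C y) = RingHom.ker (AdjoinRoot.evalEval h) := by
  refine (isMaximal_XYIdeal h).eq_of_le (RingHom.ker_ne_top _) ?_
  rw [XYIdeal, Ideal.span_le]
  rintro _ (rfl | rfl) <;> exact (AdjoinRoot.evalEval_mk h _).trans (by simp [evalEval])

lemma eq_of_XYIdeal_eq {x₁ y₁ x₂ y₂ : F} (h₂ : W.Equation x₂ y₂)
    (he : XYIdeal W x₁ (C y₁) = XYIdeal W x₂ (C y₂)) : x₁ = x₂ ∧ y₁ = y₂ := by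
  have hX : XClass W x₁ ∈ XYIdeal W x₂ (C y₂) := he ▸ Ideal.subset_span (Set.mem_insert _ _)
  have hY : YClass W (C y₁) ∈ XYIdeal W x₂ (C y₂) :=
    he ▸ Ideal.subset_span (Set.mem_insert_of_mem _ rfl)
  rw [XYIdeal_eq_ker_evalEval h₂, RingHom.mem_ker] at hX hY
  replace hX := (AdjoinRoot.evalEval_mk h₂ _).symm.trans hX
  replace hY := (AdjoinRoot.evalEval_mk h₂ _).symm.trans hY
  simp only [evalEval, eval_sub, eval_C, eval_X, sub_eq_zero] at hX hY
  exact ⟨hX.symm, hY.symm⟩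

lemma smul_basis_mem_XYIdeal_iff {x y : F} (h : W.Equation x y) (p q : F[X]) :
    p • (1 : W.CoordinateRing) + q • mk W Y ∈ XYIdeal W x (C y) ↔
      p.eval x + q.eval x * y = 0 := by
  rw [XYIdeal_eq_ker_evalEval h, RingHom.mem_ker, smul, smul, mul_one, ← map_mul, ← map_add]
  exact ((AdjoinRoot.evalEval_mk h _).trans (by simp [evalEval])).congr_left

lemma natDegree_norm_smul_basis_le {p q : F[X]} {n : ℕ} (hp : 2 * p.natDegree ≤ n)
    (hq : q = 0 ∨ 2 * q.natDegree + 3 ≤ n) :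
    (Algebra.norm F[X] (p • (1 : W.CoordinateRing) + q • mk W Y)).natDegree ≤ n := by
  rw [natDegree_le_iff_degree_le, degree_norm_smul_basis, sup_le_iff]
  refine ⟨?_, ?_⟩
  · grw [degree_le_natDegree, nsmul_eq_mul]
    exact_mod_cast hp
  · obtain rfl | hq := hq
    · simp
    grw [degree_le_natDegree, nsmul_eq_mul]
    exact_mod_cast hq

lemma finiteDimensional_quotient_span_singleton {G : W.CoordinateRing} (hG : G ≠ 0) :
    FiniteDimensional F (W.CoordinateRing ⧸ Ideal.span {G}) :=
  Module.Finite.equiv ((Ideal.quotientEquivPiSpan _ (CoordinateRing.basis W)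
    (Ideal.span_singleton_eq_bot.not.mpr hG)).restrictScalars F).symm

variable {ι : Type*} {x y : ι → F}

lemma pairwise_isCoprime_XYIdeal (h : ∀ i, W.Equation (x i) (y i))
    (hxy : ∀ i j, x i = x j → y i = y j → i = j) :
    Pairwise (Function.onFun IsCoprime fun i => XYIdeal W (x i) (C (y i))) := fun i j hij =>
  have := isMaximal_XYIdeal (h i)
  have := isMaximal_XYIdeal (h j)
  Ideal.isCoprime_of_isMaximal fun he =>
    hij (hxy i j (eq_of_XYIdeal_eq (h j) he).1 (eq_of_XYIdeal_eq (h j) he).2)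

/-- The quotients by `(G) ≤ ⨅ i, XYIdeal W (x i) (C (y i))` have dimensions `deg N(G) ≤ card ι`
and, by the Chinese remainder theorem, `card ι`; so the ideals agree, and `⨅ = ∏` by coprimality. -/
lemma span_singleton_eq_prod_XYIdeal [Fintype ι] (h : ∀ i, W.Equation (x i) (y i))
    (hxy : ∀ i j, x i = x j → y i = y j → i = j) {G : W.CoordinateRing} (hG : G ≠ 0)
    (hdeg : (Algebra.norm F[X] G).natDegree ≤ Fintype.card ι)
    (hmem : ∀ i, G ∈ XYIdeal W (x i) (C (y i))) :
    Ideal.span {G} = ∏ i, XYIdeal W (x i) (C (y i)) := by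
  have hcop := pairwise_isCoprime_XYIdeal h hxy
  have := finiteDimensional_quotient_span_singleton hG
  have := fun i => Module.finite_of_finrank_eq_succ (finrank_quotient_XYIdeal (h i))
  rw [show ∏ i, XYIdeal W (x i) (C (y i)) = ⨅ i, XYIdeal W (x i) (C (y i)) by
    simpa using Ideal.prod_eq_iInf_of_pairwise_isCoprime (s := univ) fun i _ j _ hij => hcop hij]
  refine Ideal.eq_of_le_of_finrank_quotient_le (K := F)
    (le_iInf fun i => (Ideal.span_singleton_le_iff_mem _).mpr (hmem i)) ?_
  rw [finrank_quotient_span_eq_natDegree_norm (CoordinateRing.basis W) hG,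
    Ideal.finrank_quotient_iInf hcop]
  simpa [finrank_quotient_XYIdeal (h _)] using hdeg

end WeierstrassCurve.Affine.CoordinateRing

namespace EllipticPeriods

variable {F : Type*} [Field F]

section Points

variable {W : Affine F}

lemma exists_eq_some_of_ne_zero {P : W.Point} (hP : P ≠ 0) :
    ∃ h : W.Nonsingular (xc P) (yc P), P = .some _ _ h := by
  cases P with
  | zero => exact absurd rfl hP
  | some _ _ h => exact ⟨h, rfl⟩

lemma eq_of_xc_eq_of_yc_eq {P Q : W.Point} (hP : P ≠ 0) (hQ : Q ≠ 0)
    (hx : xc P = xc Q) (hy : yc P = yc Q) : P = Q := by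
  rcases P with _ | ⟨x, y, h⟩
  · exact absurd rfl hP
  rcases Q with _ | ⟨x', y', h'⟩
  · exact absurd rfl hQ
  simp only [Point.some.injEq]
  exact ⟨hx, hy⟩

lemma eq_or_eq_neg_of_xc_eq {P Q : W.Point} (hP : P ≠ 0) (hQ : Q ≠ 0)
    (hx : xc P = xc Q) : P = Q ∨ P = -Q := by
  rcases P with _ | ⟨x, y, h⟩
  · exact absurd rfl hP
  rcases Q with _ | ⟨x', y', h'⟩
  · exact absurd rfl hQ
  exact Point.X_eq_iff.mp hx

open Classical in
lemma uf_zero_eq {A P : W.Point} (h : xc P ≠ xc (-A)) :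
    uf W 0 A P = (yc P - yc (-A)) / (xc P - xc (-A)) := by
  rw [uf, sub_zero, zero_sub, slope_of_X_ne h]

variable [DecidableEq F]

lemma xc_ne_of_nsmul_ne_zero {P Q : W.Point} {n : ℕ} (hP : n • P ≠ 0) (hQ0 : Q ≠ 0)
    (hQ : n • Q = 0) : xc P ≠ xc Q := fun hx => by
  rcases eq_or_eq_neg_of_xc_eq (fun h => hP (by rw [h, smul_zero])) hQ0 hx with rfl | rfl
  · exact hP hQ
  · exact hP (by rw [smul_neg, hQ, neg_zero])

open CoordinateRing in
/-- `(G)` is the product of the ideals of the points, so their classes multiply to `1`. -/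
theorem sum_eq_zero_of_mem_XYIdeal {ι : Type*} [Fintype ι] {P : ι → W.Point}
    (hP0 : ∀ i, P i ≠ 0) (hP : Function.Injective P) {G : W.CoordinateRing} (hG : G ≠ 0)
    (hdeg : (Algebra.norm F[X] G).natDegree ≤ Fintype.card ι)
    (hmem : ∀ i, G ∈ XYIdeal W (xc (P i)) (C (yc (P i)))) :
    ∑ i, P i = 0 := by
  choose hn hPeq using fun i => exists_eq_some_of_ne_zero (hP0 i)
  have hspan := span_singleton_eq_prod_XYIdeal (fun i => (hn i).1)
    (fun i j hx hy => hP (eq_of_xc_eq_of_yc_eq (hP0 i) (hP0 j) hx hy)) hG hdeg hmem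
  have hclass : ∏ i, ClassGroup.mk W.FunctionField (XYIdeal' (hn i)) = 1 := by
    rw [← map_prod]
    refine (ClassGroup.mk_eq_one_of_coe_ideal ?_).mpr ⟨G, hG, rfl⟩
    rw [Units.coe_prod, hspan]
    exact (map_prod (FractionalIdeal.coeIdealHom W.CoordinateRing⁰ W.FunctionField) _ _).symm
  rw [← Point.toClass_eq_zero, map_sum, sum_congr rfl fun i _ =>
    (congrArg Point.toClass (hPeq i)).trans (Point.toClass_some (hn i))]
  exact congrArg Additive.ofMul hclass

end Points

open Lagrange

section SlopeSum

variable {W : Affine F} {ι : Type*} [DecidableEq ι]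
  (J : Finset ι) (Q : ι → W.Point) (c₀ : F) (c : ι → F)

/-- `c₀ + ∑ c k u_k(P)`, with `u_k(P)` the slope of the line through `P` and `Q k`; for
`Q k = -(k • t)` this `u_k` is the paper's `u_{O,kt}` (`uf_zero_eq`). -/
def slopeSum (P : W.Point) : F :=
  c₀ + ∑ k ∈ J, c k * ((yc P - yc (Q k)) / (xc P - xc (Q k)))

/-- `slopeSum = (A + B y) / nodal J (xc ∘ Q)` with `A = slopeSumPolyA`, `B = slopeSumPolyB`. -/
def slopeSumPolyA : F[X] :=
  C c₀ * nodal J (xc ∘ Q) - ∑ k ∈ J, C (c k * yc (Q k)) * nodal (J.erase k) (xc ∘ Q)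

def slopeSumPolyB : F[X] :=
  ∑ k ∈ J, C (c k) * nodal (J.erase k) (xc ∘ Q)

variable {J Q c₀ c}

lemma eval_slopeSumPoly_of_forall_xc_ne {P : W.Point} (hP : ∀ k ∈ J, xc P ≠ xc (Q k)) :
    (slopeSumPolyA J Q c₀ c).eval (xc P) + (slopeSumPolyB J Q c).eval (xc P) * yc P =
      (nodal J (xc ∘ Q)).eval (xc P) * slopeSum J Q c₀ c P := by
  have hsplit : ∑ k ∈ J, c k * ((yc P - yc (Q k)) / (xc P - xc (Q k))) =
      (∑ k ∈ J, c k / (xc P - xc (Q k))) * yc P -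
        ∑ k ∈ J, c k * yc (Q k) / (xc P - xc (Q k)) := by
    rw [sum_mul, ← sum_sub_distrib]
    exact sum_congr rfl fun k _ => by ring
  rw [slopeSumPolyA, slopeSumPolyB, eval_sub, eval_mul, eval_C,
    eval_sum_C_mul_nodal_erase (v := xc ∘ Q) _ hP, eval_sum_C_mul_nodal_erase (v := xc ∘ Q) _ hP,
    slopeSum, hsplit]
  simp only [Function.comp_apply]
  ring

lemma eval_slopeSumPoly_at_node {m : ι} (hm : m ∈ J) :
    (slopeSumPolyA J Q c₀ c).eval (xc (Q m)) + (slopeSumPolyB J Q c).eval (xc (Q m)) * yc (Q m)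
      = 0 := by
  have hD : (nodal J (xc ∘ Q)).eval (xc (Q m)) = 0 := eval_nodal_at_node (v := xc ∘ Q) hm
  have hA : (∑ k ∈ J, C (c k * yc (Q k)) * nodal (J.erase k) (xc ∘ Q)).eval (xc (Q m)) =
      c m * yc (Q m) * (nodal (J.erase m) (xc ∘ Q)).eval (xc (Q m)) :=
    eval_sum_C_mul_nodal_erase_at_node (v := xc ∘ Q) _ hm
  have hB : (∑ k ∈ J, C (c k) * nodal (J.erase k) (xc ∘ Q)).eval (xc (Q m)) =
      c m * (nodal (J.erase m) (xc ∘ Q)).eval (xc (Q m)) :=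
    eval_sum_C_mul_nodal_erase_at_node (v := xc ∘ Q) _ hm
  rw [slopeSumPolyA, slopeSumPolyB, eval_sub, eval_mul, eval_C, hD, hA, hB]
  ring

lemma natDegree_slopeSumPolyA_le : (slopeSumPolyA J Q c₀ c).natDegree ≤ #J :=
  (natDegree_sub_le _ _).trans <| max_le
    ((natDegree_C_mul_le _ _).trans natDegree_nodal.le)
    ((natDegree_sum_C_mul_nodal_erase_le _).trans (Nat.sub_le _ _))

lemma natDegree_slopeSumPolyB_le : (slopeSumPolyB J Q c).natDegree ≤ #J - 1 :=
  natDegree_sum_C_mul_nodal_erase_le _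

/-- Points of `Q` with a common `x`-coordinate are `± Q k`, hence at most two, with distinct
`y`-coordinates: so vanishing fibre sums of `c` and of `c * y` force `c = 0`. -/
lemma eq_zero_of_forall_sum_filter_xc_eq_zero [DecidableEq F] (hQ0 : ∀ k ∈ J, Q k ≠ 0)
    (hQ : Set.InjOn Q J) (h₁ : ∀ z, ∑ k ∈ J with xc (Q k) = z, c k = 0)
    (h₂ : ∀ z, ∑ k ∈ J with xc (Q k) = z, c k * yc (Q k) = 0) :
    ∀ k ∈ J, c k = 0 := by
  intro k hk
  set S := J.filter fun j => xc (Q j) = xc (Q k)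
  have hkS : k ∈ S := mem_filter.mpr ⟨hk, rfl⟩
  have hneg (j : ι) (hj : j ∈ S.erase k) : Q j = -Q k := by
    obtain ⟨hjk, hjS⟩ := mem_erase.mp hj
    obtain ⟨hjJ, hx⟩ := mem_filter.mp hjS
    exact (eq_or_eq_neg_of_xc_eq (hQ0 j hjJ) (hQ0 k hk) hx).resolve_left
      fun he => hjk (hQ hjJ hk he)
  have hcard : #(S.erase k) ≤ 1 := card_le_one.mpr fun i hi j hj =>
    hQ (mem_filter.mp (mem_of_mem_erase hi)).1 (mem_filter.mp (mem_of_mem_erase hj)).1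
      ((hneg i hi).trans (hneg j hj).symm)
  have hsum : ∑ j ∈ S.erase k, c j * (yc (Q j) - yc (Q k)) = 0 := by
    rw [sum_erase _ (by rw [sub_self, mul_zero])]
    simp only [mul_sub, sum_sub_distrib, ← sum_mul, S, h₁, h₂, zero_mul, sub_zero]
  have hrest (j : ι) (hj : j ∈ S.erase k) : c j = 0 := by
    rw [sum_eq_single_of_mem j hj fun i hi hij => absurd (card_le_one.mp hcard i hi j hj) hij]
      at hsum
    refine (mul_eq_zero.mp hsum).resolve_right (sub_ne_zero.mpr fun hy => ?_)
    have hjJ := (mem_filter.mp (mem_of_mem_erase hj)).1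
    exact (mem_erase.mp hj).1 <| hQ hjJ hk <| eq_of_xc_eq_of_yc_eq (hQ0 j hjJ) (hQ0 k hk)
      (mem_filter.mp (mem_of_mem_erase hj)).2 hy
  have := h₁ (xc (Q k))
  rwa [← add_sum_erase _ _ hkS, sum_eq_zero hrest, add_zero] at this

lemma eq_zero_of_slopeSumPoly_eq_zero (hQ0 : ∀ k ∈ J, Q k ≠ 0) (hQ : Set.InjOn Q J)
    (hA : slopeSumPolyA J Q c₀ c = 0) (hB : slopeSumPolyB J Q c = 0) :
    c₀ = 0 ∧ ∀ k ∈ J, c k = 0 := by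
  classical
  have hc₀ : c₀ = 0 := eq_zero_of_C_mul_nodal_eq_sum (sub_eq_zero.mp hA)
  rw [slopeSumPolyA, hc₀, map_zero, zero_mul, zero_sub, neg_eq_zero] at hA
  exact ⟨hc₀, eq_zero_of_forall_sum_filter_xc_eq_zero hQ0 hQ
    (sum_filter_eq_zero_of_sum_C_mul_nodal_erase_eq_zero hB)
    (sum_filter_eq_zero_of_sum_C_mul_nodal_erase_eq_zero hA)⟩

open CoordinateRing in
/-- `nodal J (xc ∘ Q) * slopeSum` is `A + B y`, and it vanishes at the points `P j` and `Q k`,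
which are more than the degree of its norm allows unless their sum is `0`. -/
theorem eq_zero_of_slopeSum_eq_zero [DecidableEq F] {κ : Type*} [Fintype κ]
    (hJκ : #J < Fintype.card κ) (hQ0 : ∀ k ∈ J, Q k ≠ 0) (hQ : Set.InjOn Q J)
    {P : κ → W.Point} (hP0 : ∀ j, P j ≠ 0) (hP : Function.Injective P)
    (hPQ : ∀ j, ∀ k ∈ J, xc (P j) ≠ xc (Q k)) (hsum : ∑ j, P j + ∑ k ∈ J, Q k ≠ 0)
    (hf : ∀ j, slopeSum J Q c₀ c (P j) = 0) :
    c₀ = 0 ∧ ∀ k ∈ J, c k = 0 := by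
  set A := slopeSumPolyA J Q c₀ c
  set B := slopeSumPolyB J Q c
  suffices hAB : A = 0 ∧ B = 0 from eq_zero_of_slopeSumPoly_eq_zero hQ0 hQ hAB.1 hAB.2
  by_contra hAB
  let R : κ ⊕ J → W.Point := Sum.elim P fun k => Q k
  have hR0 (i : κ ⊕ J) : R i ≠ 0 := by
    rcases i with j | ⟨k, hk⟩
    exacts [hP0 j, hQ0 k hk]
  have hB : B = 0 ∨ 2 * B.natDegree + 3 ≤ Fintype.card (κ ⊕ J) := by
    rcases J.eq_empty_or_nonempty with rfl | hJ
    · exact .inl (sum_empty)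
    · have := hJ.card_pos
      have : B.natDegree ≤ #J - 1 := natDegree_slopeSumPolyB_le
      right; simp only [Fintype.card_sum, Fintype.card_coe]; omega
  have hRsum : ∑ i, R i = ∑ j, P j + ∑ k ∈ J, Q k := by
    rw [Fintype.sum_sum_type, ← sum_coe_sort J]
    rfl
  refine hsum (hRsum ▸ ?_)
  refine sum_eq_zero_of_mem_XYIdeal (P := R) hR0
    (hP.sumElim (fun k k' h => Subtype.ext (hQ k.2 k'.2 h))
      fun j k h => hPQ j k k.2 (congrArg xc h)) (fun h => hAB (smul_basis_eq_zero h))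
    (natDegree_norm_smul_basis_le ?_ hB) fun i => ?_
  · have : A.natDegree ≤ #J := natDegree_slopeSumPolyA_le
    simp only [Fintype.card_sum, Fintype.card_coe]; omega
  rw [smul_basis_mem_XYIdeal_iff (exists_eq_some_of_ne_zero (hR0 i)).1.1]
  rcases i with j | ⟨k, hk⟩
  · show A.eval (xc (P j)) + B.eval (xc (P j)) * yc (P j) = 0
    rw [eval_slopeSumPoly_of_forall_xc_ne (hPQ j), hf j, mul_zero]
  · exact eval_slopeSumPoly_at_node (W := W) (Q := Q) (c₀ := c₀) (c := c) hk

end SlopeSum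

lemma map_slopeSum {W : Affine F} {ι : Type*} {J : Finset ι}
    {Q : ι → W.Point} {c₀ : F} {c : ι → F} (σ : F →+* F) {φ : W.Point → W.Point}
    (hx : ∀ P, xc (φ P) = σ (xc P)) (hy : ∀ P, yc (φ P) = σ (yc P))
    (hQ : ∀ k ∈ J, φ (Q k) = Q k) (hc₀ : σ c₀ = c₀) (hc : ∀ k ∈ J, σ (c k) = c k)
    (P : W.Point) : σ (slopeSum J Q c₀ c P) = slopeSum J Q c₀ c (φ P) := by
  simp only [slopeSum, map_add, map_sum, map_mul, map_div₀, map_sub, hc₀, hx, hy]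
  refine congrArg _ (sum_congr rfl fun k hk => ?_)
  rw [hc k hk, ← hx (Q k), ← hy (Q k), hQ k hk]

section Frobenius

variable {K L : Type*} [Field K] [Field L] [Algebra K L]

theorem exists_baseChange_eq [Fintype K] (W : WeierstrassCurve L)
    (hW : W.a₁ ^ Fintype.card K = W.a₁ ∧ W.a₂ ^ Fintype.card K = W.a₂ ∧
      W.a₃ ^ Fintype.card K = W.a₃ ∧ W.a₄ ^ Fintype.card K = W.a₄ ∧
      W.a₆ ^ Fintype.card K = W.a₆) :
    ∃ W₀ : WeierstrassCurve K, W₀⁄L = W := by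
  obtain ⟨h₁, h₂, h₃, h₄, h₆⟩ := hW
  obtain ⟨a₁, ha₁⟩ := FiniteField.mem_range_algebraMap_of_pow_card_eq h₁
  obtain ⟨a₂, ha₂⟩ := FiniteField.mem_range_algebraMap_of_pow_card_eq h₂
  obtain ⟨a₃, ha₃⟩ := FiniteField.mem_range_algebraMap_of_pow_card_eq h₃
  obtain ⟨a₄, ha₄⟩ := FiniteField.mem_range_algebraMap_of_pow_card_eq h₄
  obtain ⟨a₆, ha₆⟩ := FiniteField.mem_range_algebraMap_of_pow_card_eq h₆
  exact ⟨⟨a₁, a₂, a₃, a₄, a₆⟩, by ext <;> assumption⟩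

theorem eq_map_frobeniusAlgHom [Fintype K] [DecidableEq L] (W₀ : Affine K)
    (φ : (W₀⁄L).Point → (W₀⁄L).Point)
    (hφ : ∀ P, xc (φ P) = xc P ^ Fintype.card K ∧
      yc (φ P) = yc P ^ Fintype.card K ∧ (φ P = 0 ↔ P = 0)) :
    φ = Point.map (W' := W₀) (FiniteField.frobeniusAlgHom K L) := by
  funext P
  cases P with
  | zero => exact (hφ 0).2.2.mpr rfl
  | some x y h =>
    exact eq_of_xc_eq_of_yc_eq (fun h0 => Point.some_ne_zero h ((hφ _).2.2.mp h0))
      (by simp [Point.map_some]) (hφ _).1 (hφ _).2.1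

variable [DecidableEq L] {W₀ : Affine K} (f : L →ₐ[K] L)

lemma xc_map (P : (W₀⁄L).Point) : xc (Point.map f P) = f (xc P) := by
  cases P
  exacts [(map_zero f).symm, rfl]

lemma yc_map (P : (W₀⁄L).Point) : yc (Point.map f P) = f (yc P) := by
  cases P
  exacts [(map_zero f).symm, rfl]

theorem slopeSum_add_nsmul_eq_zero {ι : Type*} {J : Finset ι} {Q : ι → (W₀⁄L).Point}
    {g₀ : K} {g : ι → K} {t b : (W₀⁄L).Point} (hQ : ∀ k ∈ J, Point.map f (Q k) = Q k)
    (ht : Point.map f t = t) (hb : Point.map f b = b + t)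
    (h₀ : slopeSum J Q (algebraMap K L g₀) (fun k => algebraMap K L (g k)) b = 0) (n : ℕ) :
    slopeSum J Q (algebraMap K L g₀) (fun k => algebraMap K L (g k)) (b + n • t) = 0 := by
  induction n with
  | zero => rwa [zero_smul, add_zero]
  | succ n ih =>
    have hstep : b + (n + 1) • t = Point.map f (b + n • t) := by
      rw [map_add, map_nsmul, hb, ht, succ_nsmul]
      abel
    rw [hstep, ← map_slopeSum (f : L →+* L) (xc_map f) (yc_map f) hQ (f.commutes g₀)
      (fun k _ => f.commutes (g k)), ih, map_zero]

end Frobenius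

section Orbit

variable [DecidableEq F] {W : Affine F} {t b : W.Point}

lemma xc_add_nsmul_ne_xc_neg_nsmul (hb : addOrderOf t • b ≠ 0) (j : ℕ) {k : ℕ} (hk0 : k ≠ 0)
    (hk : k < addOrderOf t) : xc (b + j • t) ≠ xc (-(k • t)) :=
  xc_ne_of_nsmul_ne_zero (by rwa [addOrderOf_nsmul_add_nsmul])
    (neg_ne_zero.mpr (nsmul_ne_zero_of_lt_addOrderOf hk0 hk))
    (by rw [smul_neg, smul_comm, addOrderOf_nsmul_eq_zero, smul_zero, neg_zero])

variable {d : ℕ} [NeZero d]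

lemma slopeSum_eq_sum_mul_uf (ht : addOrderOf t = d) (hb : d • b ≠ 0) (c : Fin d → F) :
    slopeSum (univ.erase 0) (fun k : Fin d => -((k : ℕ) • t)) (c 0) c b =
      ∑ k, c k * if (k : ℕ) = 0 then 1 else uf W 0 ((k : ℕ) • t) b := by
  subst ht
  rw [← add_sum_erase _ _ (mem_univ 0), slopeSum, Fin.val_zero, if_pos rfl, mul_one]
  refine congrArg _ (sum_congr rfl fun k hk => ?_)
  have hk0 : (k : ℕ) ≠ 0 := Fin.val_ne_zero_iff.mpr (ne_of_mem_erase hk)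
  have hx := xc_add_nsmul_ne_xc_neg_nsmul hb 0 hk0 k.2
  rw [zero_smul, add_zero] at hx
  rw [if_neg hk0, uf_zero_eq hx]

theorem eq_zero_of_slopeSum_orbit_eq_zero (ht : addOrderOf t = d) (hb : d • b ≠ 0)
    {c₀ : F} {c : Fin d → F}
    (hf : ∀ j : Fin d,
      slopeSum (univ.erase 0) (fun k : Fin d => -((k : ℕ) • t)) c₀ c (b + (j : ℕ) • t) = 0) :
    c₀ = 0 ∧ ∀ k ≠ 0, c k = 0 := by
  subst ht
  have hk0 {k : Fin (addOrderOf t)} (hk : k ∈ univ.erase 0) : (k : ℕ) ≠ 0 :=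
    Fin.val_ne_zero_iff.mpr (ne_of_mem_erase hk)
  have hinj {j k : Fin (addOrderOf t)} (h : (j : ℕ) • t = (k : ℕ) • t) : j = k :=
    Fin.ext <| nsmul_injOn_Iio_addOrderOf j.2 k.2 h
  have hsum : ∑ j : Fin (addOrderOf t), (b + (j : ℕ) • t) +
      ∑ k ∈ univ.erase (0 : Fin (addOrderOf t)), -((k : ℕ) • t) = addOrderOf t • b := by
    rw [sum_erase _ (by simp), sum_add_distrib, sum_const, card_univ, Fintype.card_fin,
      sum_neg_distrib, add_neg_cancel_right]
  have := eq_zero_of_slopeSum_eq_zero (by simp [Nat.pos_of_neZero])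
    (fun k hk => neg_ne_zero.mpr (nsmul_ne_zero_of_lt_addOrderOf (hk0 hk) k.2))
    (fun j _ k _ h => hinj (neg_injective h))
    (fun j h => hb (by rw [← addOrderOf_nsmul_add_nsmul b t j, h, smul_zero]))
    (fun j k h => hinj (add_left_cancel h))
    (fun j k hk => xc_add_nsmul_ne_xc_neg_nsmul hb j (hk0 hk) k.2) (hsum ▸ hb) hf
  exact ⟨this.1, fun k hk => this.2 k (mem_erase.mpr ⟨hk, mem_univ k⟩)⟩

end Orbit

open Classical in
/-- Here `K` plays the role of `𝔽_q` and `L` of its degree-`d` extension; `hW` says that the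
curve is defined over `𝔽_q`, and `hφ` that `φ` is the `q`-power Frobenius endomorphism. -/
theorem omega_is_basis_general {K L : Type*} [Field K] [Fintype K] [Field L] [Algebra K L]
    (d : ℕ) (hrank : Module.finrank K L = d)
    (W : WeierstrassCurve.Affine L)
    (hW : W.a₁ ^ Fintype.card K = W.a₁ ∧ W.a₂ ^ Fintype.card K = W.a₂ ∧
      W.a₃ ^ Fintype.card K = W.a₃ ∧ W.a₄ ^ Fintype.card K = W.a₄ ∧
      W.a₆ ^ Fintype.card K = W.a₆)
    (φ : W.Point → W.Point)
    (hφ : ∀ P : W.Point, xc (φ P) = xc P ^ Fintype.card K ∧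
      yc (φ P) = yc P ^ Fintype.card K ∧ (φ P = 0 ↔ P = 0))
    (t : W.Point) (ht : addOrderOf t = d) (htK : φ t = t)
    (b : W.Point) (hb : φ b = b + t) (hbd : d • b ≠ 0)
    (ω : Fin d → L)
    (hω : ∀ k : Fin d, ω k = if (k : ℕ) = 0 then 1 else uf W 0 ((k : ℕ) • t) b) :
    LinearIndependent K ω ∧ Submodule.span K (Set.range ω) = ⊤ := by
  obtain ⟨W₀, rfl⟩ := exists_baseChange_eq W hW
  obtain rfl := eq_map_frobeniusAlgHom W₀ φ hφ
  have : NeZero d := ⟨fun h => hbd (by rw [h, zero_smul])⟩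
  have hli : LinearIndependent K ω := by
    refine Fintype.linearIndependent_iff.mpr fun g hg => ?_
    simp only [hω, Algebra.smul_def] at hg
    have h₀ := (slopeSum_eq_sum_mul_uf ht hbd _).trans hg
    obtain ⟨hc₀, hc⟩ := eq_zero_of_slopeSum_orbit_eq_zero ht hbd fun j =>
      slopeSum_add_nsmul_eq_zero _ (fun k _ => by simp [htK]) htK hb h₀ j
    intro k
    obtain rfl | hk := eq_or_ne k 0
    exacts [(map_eq_zero _).mp hc₀, (map_eq_zero _).mp (hc k hk)]
  exact ⟨hli, hli.span_eq_top_of_card_eq_finrank (by rw [Fintype.card_fin, hrank])⟩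

open Classical in
/-- the system `Ω = (ω₀, …, ω_{d-1})`, where `ω₀ = 1` and
`ω_k = u_{O,kt}(b)` for `k ≢ 0`, is an `𝔽_q`-basis of `L = 𝔽_{q^d}`. Here `K` plays the
role of `𝔽_q`, `L` is its degree-`d` extension, the curve `W` is defined over `𝔽_q`
(its coefficients are fixed by the `q`-power map), `φ` is the `q`-power Frobenius
endomorphism of the curve, `t ∈ E(𝔽_q)` has order `d`, `φ(b) = b + t` and `d·b ≠ O`. -/
theorem omega_is_basis {K L : Type*} [Field K] [Fintype K] [Field L] [Algebra K L]
    (d : ℕ) (hd : 2 ≤ d) (hrank : Module.finrank K L = d)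
    (W : WeierstrassCurve.Affine L)
    (hW : W.a₁ ^ Fintype.card K = W.a₁ ∧ W.a₂ ^ Fintype.card K = W.a₂ ∧
      W.a₃ ^ Fintype.card K = W.a₃ ∧ W.a₄ ^ Fintype.card K = W.a₄ ∧
      W.a₆ ^ Fintype.card K = W.a₆)
    (φ : W.Point → W.Point)
    (hφ : ∀ P : W.Point, xc (φ P) = xc P ^ Fintype.card K ∧
      yc (φ P) = yc P ^ Fintype.card K ∧ (φ P = 0 ↔ P = 0))
    (t : W.Point) (ht : addOrderOf t = d) (htK : φ t = t)
    (b : W.Point) (hb : φ b = b + t) (hbd : d • b ≠ 0)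
    (ω : Fin d → L)
    (hω : ∀ k : Fin d, ω k = if (k : ℕ) = 0 then 1 else uf W 0 ((k : ℕ) • t) b) :
    LinearIndependent K ω ∧ Submodule.span K (Set.range ω) = ⊤ :=
  omega_is_basis_general d hrank W hW φ hφ t ht htK b hb hbd ω hω

end EllipticPeriods
end
end
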